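/- arXiv:2208.02637 — 4 statements merged into one kernel-verified Lean document; each statement's English description precedes it below -/
import Mathlib

section
/- Let d ≥ 1 be an integer and p ∈ [0, 1). Then there exists a Lebesgue measurable set E ⊆ ℝ^d such that |E ∩ (m + [0,1]^d)| ≥ p for all m ∈ ℤ^d, and E contains no set of the form x + ℕ·Δ = {x + n·Δ : n ∈ ℕ} with x ∈ ℝ^d and Δ ∈ ℝ^d \ {0} (i.e., E contains no infinite arithmetic progression in ℝ^d). -/
open MeasureTheory Filter Set Topology

/-!
Fix a small `ℓ > 0` and let `B ⊆ ℝ` be the union of the closed `ℓ`-neighbourhoods of `ℤ` and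
of `√2 ℤ`. A progression `y + n Δ` with `Δ ≠ 0` meets `B`: `Δ` and `Δ / √2` cannot both be
rational, and if `Δ / c` is irrational then the `ℕ`-multiples of `Δ` are dense in `ℝ / cℤ`
(for `ℤ`-multiples this is the irrational rotation, and in a compact group the two closures
agree). Each neighbourhood takes up at most `2ℓ` of a unit interval, so
`E = {x | ∀ i, x i ∉ B}` has measure at least `(1 - 4ℓ)^d` in every unit cube, which
exceeds `p` once `ℓ` is small.
-/

-- The closed `ℓ`-neighbourhood of `c ℤ`.
def nearMultiples (c ℓ : ℝ) : Set ℝ :=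
  ((↑) : ℝ → AddCircle c) ⁻¹' Metric.closedBall 0 ℓ

theorem measurableSet_nearMultiples (c ℓ : ℝ) : MeasurableSet (nearMultiples c ℓ) :=
  (Metric.isClosed_closedBall.preimage (AddCircle.continuous_mk' c)).measurableSet

theorem volume_nearMultiples_inter_Icc_le {c : ℝ} (hc : 1 ≤ c) (ℓ a : ℝ) :
    volume (nearMultiples c ℓ ∩ Icc a (a + 1)) ≤ ENNReal.ofReal (2 * ℓ) := by
  have : Fact (0 < c) := ⟨by linarith⟩
  calc volume (nearMultiples c ℓ ∩ Icc a (a + 1))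
      = volume (nearMultiples c ℓ ∩ Ioc a (a + 1)) :=
        measure_congr (ae_eq_refl _ |>.inter Ioc_ae_eq_Icc.symm)
    _ ≤ volume (nearMultiples c ℓ ∩ Ioc a (a + c)) := by gcongr
    _ = volume (Metric.closedBall (0 : AddCircle c) ℓ) :=
        (AddCircle.add_projection_respects_measure c a measurableSet_closedBall).symm
    _ = ENNReal.ofReal (min c (2 * ℓ)) := AddCircle.volume_closedBall (T := c) ℓ
    _ ≤ ENNReal.ofReal (2 * ℓ) := ENNReal.ofReal_le_ofReal (min_le_right _ _)

theorem exists_add_nat_mul_mem_nearMultiples {c ℓ Δ : ℝ} (hc : 0 < c) (hℓ : 0 < ℓ)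
    (hΔ : Irrational (Δ / c)) (y : ℝ) : ∃ n : ℕ, y + n * Δ ∈ nearMultiples c ℓ := by
  have : Fact (0 < c) := ⟨hc⟩
  have hdense : DenseRange fun n : ℕ => n • (Δ : AddCircle c) :=
    denseRange_zsmul_iff_nsmul.1 (AddCircle.denseRange_zsmul_coe_iff.2 hΔ)
  obtain ⟨n, hn⟩ := hdense.exists_mem_open Metric.isOpen_ball
    ⟨-(y : AddCircle c), Metric.mem_ball_self hℓ⟩
  refine ⟨n, ?_⟩
  rw [nearMultiples, mem_preimage, mem_closedBall_zero_iff, ← nsmul_eq_mul, AddCircle.coe_add,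
    AddCircle.coe_nsmul, add_comm, ← sub_neg_eq_add, ← dist_eq_norm]
  exact (Metric.mem_ball.1 hn).le

def nearLattices (ℓ : ℝ) : Set ℝ :=
  nearMultiples 1 ℓ ∪ nearMultiples (√2) ℓ

theorem measurableSet_nearLattices (ℓ : ℝ) : MeasurableSet (nearLattices ℓ) :=
  (measurableSet_nearMultiples 1 ℓ).union (measurableSet_nearMultiples _ ℓ)

theorem exists_add_nat_mul_mem_nearLattices {ℓ Δ : ℝ} (hℓ : 0 < ℓ) (hΔ : Δ ≠ 0) (y : ℝ) :
    ∃ n : ℕ, y + n * Δ ∈ nearLattices ℓ := by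
  by_cases hirr : Irrational Δ
  · obtain ⟨n, hn⟩ := exists_add_nat_mul_mem_nearMultiples one_pos hℓ (by rwa [div_one]) y
    exact ⟨n, Or.inl hn⟩
  · obtain ⟨q, rfl⟩ : Δ ∈ range ((↑) : ℚ → ℝ) := not_not.1 hirr
    have hq : q ≠ 0 := by rintro rfl; simp at hΔ
    obtain ⟨n, hn⟩ := exists_add_nat_mul_mem_nearMultiples (by positivity) hℓ
      (irrational_sqrt_two.ratCast_div hq) y
    exact ⟨n, Or.inr hn⟩

theorem ofReal_one_sub_le_volume_Icc_diff_nearLattices {ℓ : ℝ} (hℓ : 0 ≤ ℓ) (a : ℝ) :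
    ENNReal.ofReal (1 - 4 * ℓ) ≤ volume (Icc a (a + 1) \ nearLattices ℓ) := by
  have hbad : volume (nearLattices ℓ ∩ Icc a (a + 1)) ≤ ENNReal.ofReal (4 * ℓ) := by
    calc volume (nearLattices ℓ ∩ Icc a (a + 1))
        ≤ volume (nearMultiples 1 ℓ ∩ Icc a (a + 1)) +
          volume (nearMultiples (√2) ℓ ∩ Icc a (a + 1)) := by
          rw [nearLattices, union_inter_distrib_right]
          exact measure_union_le _ _
      _ ≤ ENNReal.ofReal (2 * ℓ) + ENNReal.ofReal (2 * ℓ) := by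
          gcongr
          · exact volume_nearMultiples_inter_Icc_le le_rfl ℓ a
          · exact volume_nearMultiples_inter_Icc_le Real.one_lt_sqrt_two.le ℓ a
      _ = ENNReal.ofReal (4 * ℓ) := by
          rw [← ENNReal.ofReal_add (by positivity) (by positivity)]
          ring_nf
  calc ENNReal.ofReal (1 - 4 * ℓ) = volume (Icc a (a + 1)) - ENNReal.ofReal (4 * ℓ) := by
        rw [Real.volume_Icc, add_sub_cancel_left, ENNReal.ofReal_sub _ (by positivity)]
    _ ≤ volume (Icc a (a + 1)) - volume (nearLattices ℓ ∩ Icc a (a + 1)) := by gcongr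
    _ ≤ volume (Icc a (a + 1) \ (nearLattices ℓ ∩ Icc a (a + 1))) := le_measure_sdiff
    _ = volume (Icc a (a + 1) \ nearLattices ℓ) := by rw [sdiff_inter_self_eq_sdiff]

theorem EuclideanSpace.volume_setOf_forall_mem {ι : Type*} [Fintype ι] (s : ι → Set ℝ) :
    volume {x : EuclideanSpace ℝ ι | ∀ i, x i ∈ s i} = ∏ i, volume (s i) := by
  rw [← volume_pi_pi]
  convert (EuclideanSpace.volume_preserving_symm_measurableEquiv_toLp ι).measure_preimage_equiv
    (univ.pi s) using 2
  ext x
  simp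

theorem exists_pos_le_one_le_one_sub_pow {p : ℝ} (hp : p < 1) (d : ℕ) :
    ∃ η : ℝ, 0 < η ∧ η ≤ 1 ∧ p ≤ (1 - η) ^ d := by
  have hlim : Tendsto (fun η : ℝ => (1 - η) ^ d) (𝓝[>] 0) (𝓝 1) := by
    have : Continuous fun η : ℝ => (1 - η) ^ d := by fun_prop
    simpa using this.continuousWithinAt.tendsto (x := 0) (s := Ioi 0)
  obtain ⟨η, ⟨hη, hηp⟩, hηpos⟩ := ((hlim.eventually (eventually_ge_nhds hp)).and
    (Ioc_mem_nhdsGT (zero_lt_one' ℝ))).and self_mem_nhdsWithin |>.exists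
  exact ⟨η, hηpos, hηp.2, hη⟩

theorem large_set_no_arithmetic_progression_general
    (d : ℕ)
    (p : ℝ) (hp1 : p < 1) :
    ∃ E : Set (EuclideanSpace ℝ (Fin d)), MeasurableSet E ∧
      (∀ m : Fin d → ℤ, ENNReal.ofReal p ≤
        volume (E ∩ {x : EuclideanSpace ℝ (Fin d) |
          ∀ i : Fin d, (m i : ℝ) ≤ x i ∧ x i ≤ (m i : ℝ) + 1})) ∧
      (∀ x Δ : EuclideanSpace ℝ (Fin d), Δ ≠ 0 →
        ¬ (Set.range (fun n : ℕ => x + (n : ℝ) • Δ) ⊆ E)) := by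
  obtain ⟨η, hη0, hη1, hpη⟩ := exists_pos_le_one_le_one_sub_pow hp1 d
  refine ⟨{x | ∀ i, x i ∉ nearLattices (η / 4)}, ?_, fun m => ?_, fun x Δ hΔ hsub => ?_⟩
  · simp only [ofPred_forall]
    exact MeasurableSet.iInter fun i =>
      (measurableSet_nearLattices _).compl.preimage (EuclideanSpace.proj i).continuous.measurable
  · have hcube : {x : EuclideanSpace ℝ (Fin d) | ∀ i, x i ∉ nearLattices (η / 4)} ∩
        {x | ∀ i : Fin d, (m i : ℝ) ≤ x i ∧ x i ≤ (m i : ℝ) + 1} =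
        {x | ∀ i, x i ∈ Icc (m i : ℝ) (m i + 1) \ nearLattices (η / 4)} := by
      ext x
      simp only [mem_inter_iff, mem_ofPred_eq, Set.mem_sdiff, mem_Icc, forall_and]
      tauto
    rw [hcube, EuclideanSpace.volume_setOf_forall_mem]
    calc ENNReal.ofReal p ≤ ENNReal.ofReal (1 - η) ^ d := by
          rw [← ENNReal.ofReal_pow (by linarith)]
          exact ENNReal.ofReal_le_ofReal hpη
      _ = ∏ _i : Fin d, ENNReal.ofReal (1 - 4 * (η / 4)) := by
          rw [Finset.prod_const, Finset.card_univ, Fintype.card_fin]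
          ring_nf
      _ ≤ _ := Finset.prod_le_prod' fun i _ =>
          ofReal_one_sub_le_volume_Icc_diff_nearLattices (by positivity) _
  · obtain ⟨i, hi⟩ : ∃ i, Δ i ≠ 0 := by
      by_contra! h
      exact hΔ (PiLp.ext h)
    obtain ⟨n, hn⟩ := exists_add_nat_mul_mem_nearLattices (ℓ := η / 4) (by positivity) hi (x i)
    exact hsub (mem_range_self n) i (by simpa using hn)

/-- **Large sets with no infinite arithmetic progressions in `ℝ^d`.**
For every `0 ≤ p < 1` there is a measurable `E ⊆ ℝ^d` with measure at least `p` in every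
integer unit cube, containing no set `{x + n • Δ : n ∈ ℕ}` with `x ∈ ℝ^d`, `Δ ≠ 0`. -/
theorem large_set_no_arithmetic_progression
    (d : ℕ) (hd : 1 ≤ d)
    (p : ℝ) (hp0 : 0 ≤ p) (hp1 : p < 1) :
    ∃ E : Set (EuclideanSpace ℝ (Fin d)), MeasurableSet E ∧
      (∀ m : Fin d → ℤ, ENNReal.ofReal p ≤
        volume (E ∩ {x : EuclideanSpace ℝ (Fin d) |
          ∀ i : Fin d, (m i : ℝ) ≤ x i ∧ x i ≤ (m i : ℝ) + 1})) ∧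
      (∀ x Δ : EuclideanSpace ℝ (Fin d), Δ ≠ 0 →
        ¬ (Set.range (fun n : ℕ => x + (n : ℝ) • Δ) ⊆ E)) :=
  large_set_no_arithmetic_progression_general d p hp1
end

section
/- Let A = {a_0 = 0 < a_1 < a_2 < ⋯} ⊆ ℝ be a strictly increasing sequence with a_0 = 0 and a_n → +∞, and let p ∈ [0, 1). Then there exists a Lebesgue measurable set E ⊆ ℝ such that no translate x + A = {x + a_n : n ∈ ℕ} (x ∈ ℝ) is contained in E, and such that |E ∩ [m, m+1]| ≥ p for every integer m ∈ ℤ. -/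
/-!
Put `δ = 1 - p` and let `E` be the complement of a union of closed intervals of length `δ`, any
two of them more than a unit apart: a unit interval meets at most one of them, so it keeps
measure at least `1 - δ = p`. The intervals are indexed by the points `kδ` (`k ∈ ℤ`), the `k`-th
being `[kδ + a nₖ, kδ + a nₖ + δ]` with `nₖ` so large (`a` is unbounded) that it lies far to the
right of the earlier ones. Every `x ∈ [kδ, (k + 1)δ]` then has `x + a nₖ ∉ E`.
-/

open MeasureTheory Filter Set

theorem exists_gapped_add_of_not_bddAbove {α : Type*} {a : α → ℝ} (ha : ¬BddAbove (range a))
    (L : ℕ → ℝ) {g : ℝ} (hg : 0 ≤ g) :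
    ∃ i : ℕ → α, ∀ r u, r < u → L r + a (i r) + g < L u + a (i u) := by
  have hlarge : ∀ C, ∃ j, C < a j := fun C => by simpa using not_bddAbove_iff.1 ha C
  choose f hf using hlarge
  let i : ℕ → α := fun s =>
    Nat.rec (motive := fun _ => α) (f 0) (fun s j => f (L s + a j + g - L (s + 1))) s
  have hstep : ∀ s, L s + a (i s) + g < L (s + 1) + a (i (s + 1)) := fun s => by
    linarith [hf (L s + a (i s) + g - L (s + 1))]
  have hmono : Monotone fun s => L s + a (i s) :=
    monotone_nat_of_le_succ fun s => by linarith [hstep s]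
  exact ⟨i, fun r u hru => (hstep r).trans_le (hmono hru)⟩

theorem volume_iUnion_Icc_inter_Icc_le {c : ℕ → ℝ} {w ℓ : ℝ}
    (hc : ∀ r u, r < u → c r + w + ℓ < c u) (m : ℝ) :
    volume ((⋃ s, Icc (c s) (c s + w)) ∩ Icc m (m + ℓ)) ≤ ENNReal.ofReal w := by
  have hunique : ∀ r u y z, y ∈ Icc (c r) (c r + w) ∩ Icc m (m + ℓ) →
      z ∈ Icc (c u) (c u + w) ∩ Icc m (m + ℓ) → r = u := by
    rintro r u y z ⟨⟨hry, hyr⟩, hmy, hym⟩ ⟨⟨huz, hzu⟩, hmz, hzm⟩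
    rcases lt_trichotomy r u with hlt | heq | hgt
    · linarith [hc r u hlt]
    · exact heq
    · linarith [hc u r hgt]
  rcases ((⋃ s, Icc (c s) (c s + w)) ∩ Icc m (m + ℓ)).eq_empty_or_nonempty with
    hempty | ⟨z, hz, hzJ⟩
  · simp [hempty]
  obtain ⟨s₀, hzs₀⟩ := mem_iUnion.1 hz
  have hsub : (⋃ s, Icc (c s) (c s + w)) ∩ Icc m (m + ℓ) ⊆ Icc (c s₀) (c s₀ + w) := by
    rintro y ⟨hy, hyJ⟩
    obtain ⟨s, hys⟩ := mem_iUnion.1 hy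
    rwa [hunique s s₀ y z ⟨hys, hyJ⟩ ⟨hzs₀, hzJ⟩] at hys
  calc _ ≤ volume (Icc (c s₀) (c s₀ + w)) := measure_mono hsub
    _ = ENNReal.ofReal w := by simp [Real.volume_Icc]

theorem ofReal_sub_le_volume_compl_iUnion_Icc_inter_Icc {c : ℕ → ℝ} {w ℓ : ℝ} (hw : 0 ≤ w)
    (hc : ∀ r u, r < u → c r + w + ℓ < c u) (m : ℝ) :
    ENNReal.ofReal (ℓ - w) ≤ volume ((⋃ s, Icc (c s) (c s + w))ᶜ ∩ Icc m (m + ℓ)) := by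
  set F := ⋃ s, Icc (c s) (c s + w)
  rw [inter_comm, ← sdiff_eq, ← sdiff_inter_self_eq_sdiff, ENNReal.ofReal_sub _ hw]
  calc ENNReal.ofReal ℓ - ENNReal.ofReal w
      ≤ volume (Icc m (m + ℓ)) - volume (F ∩ Icc m (m + ℓ)) := by
        gcongr
        · simp [Real.volume_Icc]
        · exact volume_iUnion_Icc_inter_Icc_le hc m
    _ ≤ _ := by rw [inter_comm]; exact le_measure_sdiff

theorem large_set_no_translate_general
    (a : ℕ → ℝ)
    (htop : Tendsto a atTop atTop)
    (p : ℝ) (hp1 : p < 1) :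
    ∃ E : Set ℝ, MeasurableSet E ∧
      (∀ x : ℝ, ¬ (Set.range (fun n : ℕ => x + a n) ⊆ E)) ∧
      (∀ m : ℤ, ENNReal.ofReal p ≤ volume (E ∩ Set.Icc (m : ℝ) ((m : ℝ) + 1))) := by
  set δ := 1 - p
  have hδ : 0 < δ := sub_pos.2 hp1
  let L : ℕ → ℝ := fun s => (Equiv.intEquivNat.symm s : ℝ) * δ
  obtain ⟨i, hi⟩ := exists_gapped_add_of_not_bddAbove (not_bddAbove_of_tendsto_atTop htop) L
    (g := δ + 1) (by positivity)
  let c : ℕ → ℝ := fun s => L s + a (i s)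
  refine ⟨(⋃ s, Icc (c s) (c s + δ))ᶜ, (MeasurableSet.iUnion fun _ => measurableSet_Icc).compl,
    fun x hx => ?_, fun m => ?_⟩
  · obtain ⟨k, ⟨hkx, hxk⟩, -⟩ := existsUnique_zsmul_near_of_pos hδ x
    have hmem : x + a (i (Equiv.intEquivNat k)) ∈ ⋃ s, Icc (c s) (c s + δ) :=
      mem_iUnion.2 ⟨Equiv.intEquivNat k, by
        simp only [zsmul_eq_mul, Int.cast_add, Int.cast_one] at hkx hxk
        simp only [c, L, Equiv.symm_apply_apply, mem_Icc]
        constructor <;> linarith⟩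
    exact hx ⟨_, rfl⟩ hmem
  · have := ofReal_sub_le_volume_compl_iUnion_Icc_inter_Icc (c := c) (ℓ := 1) hδ.le
      (fun r u hru => by linarith [hi r u hru]) m
    rwa [sub_sub_cancel] at this

/-- **Large sets with no translate of a given unbounded sequence.**
If `a : ℕ → ℝ` is strictly increasing with `a 0 = 0` and `a n → +∞`, then for every
`0 ≤ p < 1` there is a measurable `E ⊆ ℝ` with `|E ∩ [m, m+1]| ≥ p` for all `m ∈ ℤ`,
containing no translate `{x + a n : n ∈ ℕ}`. -/
theorem large_set_no_translate
    (a : ℕ → ℝ) (h0 : a 0 = 0) (hmono : StrictMono a)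
    (htop : Tendsto a atTop atTop)
    (p : ℝ) (hp0 : 0 ≤ p) (hp1 : p < 1) :
    ∃ E : Set ℝ, MeasurableSet E ∧
      (∀ x : ℝ, ¬ (Set.range (fun n : ℕ => x + a n) ⊆ E)) ∧
      (∀ m : ℤ, ENNReal.ofReal p ≤ volume (E ∩ Set.Icc (m : ℝ) ((m : ℝ) + 1))) :=
  large_set_no_translate_general a htop p hp1
end

section
/- Let A = {a_0 = 0 < a_1 < a_2 < ⋯} ⊆ ℝ be a strictly increasing sequence with a_0 = 0 and a_n → +∞. Then there exists a Lebesgue measurable set E ⊆ ℝ such that no translate x + A = {x + a_n : n ∈ ℕ} (x ∈ ℝ) is contained in E, and such that (−∞, 0] ⊆ E and |E ∩ [m, m+1]| → 1 as m → +∞ (over integers m). -/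
/-!
Cover `ℝ` by the annuli `r i ≤ |x| < r (i + 1)`, where `r i` are the harmonic sums: their widths
`1 / (i + 1)` tend to `0`, yet their union is all of `ℝ`. Pick elements `b i` of `A` so quickly
increasing that the translated annuli `b i + {r i ≤ |x| < r (i + 1)}` lie in `(0, ∞)` and are more
than `1` apart, and let `E` be the complement of their union. Every translate `x + A` meets the
`i`-th annulus at `x + b i`, where `r i ≤ |x| < r (i + 1)`. A unit interval far to the right
meets at most one annulus, and only one of large index `i`, hence of small measure `2 / (i + 1)`.
-/

open MeasureTheory Filter Metric Set Topology

theorem Filter.Tendsto.exists_seq_mem_range_le_rec {ι α : Type*} [Preorder α] {l : Filter ι}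
    [l.NeBot] {a : ι → α} (ha : Tendsto a l atTop) (c : α) (next : ℕ → α → α) :
    ∃ b : ℕ → α, (∀ i, b i ∈ range a) ∧ c ≤ b 0 ∧ ∀ i, next i (b i) ≤ b (i + 1) := by
  have h : ∀ C, ∃ y ∈ range a, C ≤ y := fun C =>
    let ⟨n, hn⟩ := (ha.eventually_ge_atTop C).exists
    ⟨a n, mem_range_self n, hn⟩
  choose f hf_range hf_ge using h
  refine ⟨fun i => Nat.rec (f c) (fun i y => f (next i y)) i, fun i => ?_, hf_ge c,
    fun i => hf_ge _⟩
  cases i <;> exact hf_range _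

theorem exists_monotone_tendsto_atTop_succ_sub_tendsto_zero :
    ∃ r : ℕ → ℝ, Monotone r ∧ r 0 = 0 ∧ Tendsto r atTop atTop ∧
      Tendsto (fun i => r (i + 1) - r i) atTop (𝓝 0) := by
  have hstep (i : ℕ) : ∑ k ∈ Finset.range (i + 1), 1 / ((k : ℝ) + 1) -
      ∑ k ∈ Finset.range i, 1 / ((k : ℝ) + 1) = 1 / ((i : ℝ) + 1) := by
    rw [Finset.sum_range_succ, add_sub_cancel_left]
  refine ⟨fun i => ∑ k ∈ Finset.range i, 1 / ((k : ℝ) + 1),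
    monotone_nat_of_le_succ fun i => sub_nonneg.1 ?_, Finset.sum_range_zero _,
    Real.tendsto_sum_range_one_div_nat_succ_atTop, ?_⟩
  · rw [hstep]
    positivity
  · simpa only [hstep] using tendsto_one_div_add_atTop_nhds_zero_nat

theorem exists_add_mem_ball_sdiff_ball {E : Type*} [SeminormedAddCommGroup E] {r : ℕ → ℝ}
    (hr : Monotone r) (hr0 : r 0 ≤ 0) (hr_top : Tendsto r atTop atTop) (b : ℕ → E) (x : E) :
    ∃ i, x + b i ∈ ball (b i) (r (i + 1)) \ ball (b i) (r i) := by
  have hcover := iUnion_Ico_map_succ_eq_Ici (fun i => hr (Nat.zero_le i))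
    (not_bddAbove_of_tendsto_atTop hr_top)
  have hx : ‖x‖ ∈ Ici (r ⊥) := hr0.trans (norm_nonneg x)
  rw [← hcover] at hx
  obtain ⟨i, hi_ge, hi_lt⟩ := mem_iUnion.1 hx
  exact ⟨i, by simpa [dist_eq_norm] using hi_lt, by simpa [dist_eq_norm] using hi_ge⟩

theorem Real.volume_ball_sdiff_ball (c : ℝ) {ρ R : ℝ} (hρ : 0 ≤ ρ) (hρR : ρ ≤ R) :
    volume (ball c R \ ball c ρ) = ENNReal.ofReal (2 * (R - ρ)) := by
  rw [measure_sdiff (ball_subset_ball hρR) measurableSet_ball.nullMeasurableSet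
    measure_ball_lt_top.ne, Real.volume_ball, Real.volume_ball,
    ← ENNReal.ofReal_sub _ (by positivity), mul_sub]

section Gaps

variable {L U : ℕ → ℝ}

theorem monotone_of_le_of_gap (hLU : ∀ i, L i ≤ U i) (hgap : ∀ i, U i + 1 < L (i + 1)) :
    Monotone L :=
  monotone_nat_of_le_succ fun k => by linarith [hLU k, hgap k]

theorem add_one_lt_of_lt_of_gap (hLU : ∀ i, L i ≤ U i) (hgap : ∀ i, U i + 1 < L (i + 1))
    {i j : ℕ} (hij : i < j) : U i + 1 < L j :=
  (hgap i).trans_le <| monotone_of_le_of_gap hLU hgap hij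

theorem eq_of_mem_Icc_of_abs_sub_le_one (hLU : ∀ i, L i ≤ U i)
    (hgap : ∀ i, U i + 1 < L (i + 1)) {i j : ℕ} {y z : ℝ} (hy : y ∈ Icc (L i) (U i))
    (hz : z ∈ Icc (L j) (U j)) (hyz : |y - z| ≤ 1) : i = j := by
  rw [abs_le] at hyz
  rcases lt_trichotomy i j with h | h | h
  · linarith [add_one_lt_of_lt_of_gap hLU hgap h, hy.2, hz.1]
  · exact h
  · linarith [add_one_lt_of_lt_of_gap hLU hgap h, hy.1, hz.2]

theorem tendsto_volume_Icc_inter_iUnion {R : ℕ → Set ℝ} (hR : ∀ i, R i ⊆ Icc (L i) (U i))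
    (hLU : ∀ i, L i ≤ U i) (hgap : ∀ i, U i + 1 < L (i + 1))
    (hvol : Tendsto (fun i => volume (R i)) atTop (𝓝 0)) :
    Tendsto (fun t : ℝ => volume (Icc t (t + 1) ∩ ⋃ i, R i)) atTop (𝓝 0) := by
  rw [ENNReal.tendsto_nhds_zero] at hvol ⊢
  intro ε hε
  obtain ⟨I, hI⟩ := eventually_atTop.1 (hvol ε hε)
  filter_upwards [eventually_ge_atTop (L I)] with t ht
  rcases (Icc t (t + 1) ∩ ⋃ i, R i).eq_empty_or_nonempty with h | ⟨y₀, hy₀J, hy₀⟩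
  · simp [h]
  obtain ⟨i₀, hi₀⟩ := mem_iUnion.1 hy₀
  have hI_le : I ≤ i₀ := by
    by_contra! h
    linarith [add_one_lt_of_lt_of_gap hLU hgap h, (hR i₀ hi₀).2, hy₀J.1]
  have hsub : Icc t (t + 1) ∩ ⋃ i, R i ⊆ R i₀ := by
    rintro y ⟨hyJ, hy⟩
    obtain ⟨j, hj⟩ := mem_iUnion.1 hy
    obtain rfl : j = i₀ := eq_of_mem_Icc_of_abs_sub_le_one hLU hgap (hR j hj) (hR i₀ hi₀)
      (abs_sub_le_iff.2 ⟨by linarith [hyJ.2, hy₀J.1], by linarith [hyJ.1, hy₀J.2]⟩)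
    exact hj
  exact (measure_mono hsub).trans (hI i₀ hI_le)

end Gaps

theorem tendsto_volume_compl_inter_Icc {S : Set ℝ} (hS : MeasurableSet S)
    (h : Tendsto (fun t : ℝ => volume (Icc t (t + 1) ∩ S)) atTop (𝓝 0)) :
    Tendsto (fun t : ℝ => (volume (Sᶜ ∩ Icc t (t + 1))).toReal) atTop (𝓝 1) := by
  have hcompl (t : ℝ) : (volume (Sᶜ ∩ Icc t (t + 1))).toReal =
      1 - (volume (Icc t (t + 1) ∩ S)).toReal := by
    have := measureReal_sdiff_add_inter (μ := volume) (s := Icc t (t + 1)) hS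
      measure_Icc_lt_top.ne
    rw [Real.volume_real_Icc, add_sub_cancel_left, max_eq_left zero_le_one, sdiff_eq_compl_inter]
      at this
    simp only [Measure.real] at this
    linarith
  simp only [hcompl]
  simpa using tendsto_const_nhds.sub ((ENNReal.tendsto_toReal ENNReal.zero_ne_top).comp h)

theorem denser_set_no_translate_general
    (a : ℕ → ℝ)
    (htop : Tendsto a atTop atTop) :
    ∃ E : Set ℝ, MeasurableSet E ∧
      (∀ x : ℝ, ¬ (Set.range (fun n : ℕ => x + a n) ⊆ E)) ∧
      Set.Iic (0 : ℝ) ⊆ E ∧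
      Tendsto (fun m : ℤ => (volume (E ∩ Set.Icc (m : ℝ) ((m : ℝ) + 1))).toReal)
        atTop (nhds 1) := by
  obtain ⟨r, hr, hr0, hr_top, hr_step⟩ := exists_monotone_tendsto_atTop_succ_sub_tendsto_zero
  have hr_nonneg (i : ℕ) : 0 ≤ r i := hr0 ▸ hr (Nat.zero_le i)
  obtain ⟨b, hb_range, hb0, hb_step⟩ := htop.exists_seq_mem_range_le_rec (r 1 + 1)
    fun i y => y + r (i + 1) + r (i + 2) + 2
  set annulus : ℕ → Set ℝ := fun i => ball (b i) (r (i + 1)) \ ball (b i) (r i)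
  have hannulus (i : ℕ) : annulus i ⊆ Icc (b i - r (i + 1)) (b i + r (i + 1)) :=
    sdiff_subset.trans (Real.ball_eq_Ioo _ _ ▸ Ioo_subset_Icc_self)
  have hLU (i : ℕ) : b i - r (i + 1) ≤ b i + r (i + 1) := by linarith [hr_nonneg (i + 1)]
  have hgap (i : ℕ) : b i + r (i + 1) + 1 < b (i + 1) - r (i + 1 + 1) := by linarith [hb_step i]
  have hannulus_meas : MeasurableSet (⋃ i, annulus i) :=
    .iUnion fun i => measurableSet_ball.diff measurableSet_ball
  refine ⟨(⋃ i, annulus i)ᶜ, hannulus_meas.compl, fun x hx => ?_, fun y hy hy_mem => ?_, ?_⟩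
  · obtain ⟨i, hi⟩ := exists_add_mem_ball_sdiff_ball hr hr0.le hr_top b x
    obtain ⟨n, hn⟩ := hb_range i
    exact hx ⟨n, congrArg (x + ·) hn⟩ (mem_iUnion_of_mem i hi)
  · obtain ⟨i, hi⟩ := mem_iUnion.1 hy_mem
    linarith [(hannulus i hi).1, monotone_of_le_of_gap hLU hgap (Nat.zero_le i), hb0,
      mem_Iic.1 hy]
  · refine (tendsto_volume_compl_inter_Icc hannulus_meas ?_).comp tendsto_intCast_atTop_atTop
    refine tendsto_volume_Icc_inter_iUnion hannulus hLU hgap ?_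
    simp only [annulus, Real.volume_ball_sdiff_ball _ (hr_nonneg _) (hr (Nat.le_succ _))]
    simpa using ENNReal.tendsto_ofReal (hr_step.const_mul 2)

/-- **A progressively denser set with no translate of a given unbounded sequence.**
If `a : ℕ → ℝ` is strictly increasing with `a 0 = 0` and `a n → +∞`, then there is a
measurable `E ⊆ ℝ` containing no translate `{x + a n : n ∈ ℕ}`, with `(-∞, 0] ⊆ E` and
`|E ∩ [m, m+1]| → 1` as the integer `m → +∞`. -/
theorem denser_set_no_translate
    (a : ℕ → ℝ) (h0 : a 0 = 0) (hmono : StrictMono a)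
    (htop : Tendsto a atTop atTop) :
    ∃ E : Set ℝ, MeasurableSet E ∧
      (∀ x : ℝ, ¬ (Set.range (fun n : ℕ => x + a n) ⊆ E)) ∧
      Set.Iic (0 : ℝ) ⊆ E ∧
      Tendsto (fun m : ℤ => (volume (E ∩ Set.Icc (m : ℝ) ((m : ℝ) + 1))).toReal)
        atTop (nhds 1) :=
  denser_set_no_translate_general a htop
end

section
/- Let A = {a_n : n ∈ ℕ} be a real sequence of class (A). For all real numbers 0 < a < b and every p with 0 ≤ p < 1, there exists a Lebesgue measurable set E ⊆ ℝ such that |E ∩ [m, m+1]| ≥ p for every integer m ∈ ℤ, but E contains no affine copy of A with scale in [a, b]; that is, for every x ∈ ℝ and every t ∈ [a, b] the set {x + t·a_n : n ∈ ℕ} is not contained in E. -/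
/-!
Random construction. Let `ω k` (`k ∈ ℤ`) be independent and uniform on `[0, 2]`, cut the hole
`[k + ω k, k + ω k + ε]` out of `ℝ` for every `k`, and let `E` be what remains; a unit interval
meets at most four holes, so it keeps measure `≥ 1 - 4ε`.

Pass to a subsequence `u r = a_{r s}` with `a s ≥ 1`, so that for `t ≥ a` the points
`x + t u r` lie in distinct unit intervals. The hole of index `⌊y⌋ - 1` contains `[y, y + ε/2]`
with probability `ε / 4`, independently for these points, so all of the first `R` of them escape
with probability `≤ (1 - ε/4)^R`. A grid of mesh `δ = ε / (2 (1 + u R))` on the cell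
`[m, m + 1) × [a, b]` of `(x, t)` reduces all copies with `x` in that cell to `O((1 + u R)^2)`
grid points, and `log u R = o(R)` makes this polynomial factor negligible against
`(1 - ε/4)^R`. Choosing `R = R m` for each cell so that the failure probabilities sum to less
than `1`, some `ω` works for every cell at once.
-/

open MeasureTheory Filter Set Topology
open scoped ENNReal

lemma infinitePi_setOf_forall_mem_le_pow {ι X : Type*} [MeasurableSpace X] (ν : Measure X)
    [IsProbabilityMeasure ν] {k : ℕ → ι} (hk : Function.Injective k) {S : ℕ → Set X}
    (hS : ∀ r, MeasurableSet (S r)) {β : ℝ≥0∞} (hβ : ∀ r, ν (S r) ≤ β) (R : ℕ) :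
    Measure.infinitePi (fun _ : ι => ν) {ω | ∀ r < R, ω (k r) ∈ S r} ≤ β ^ R := by
  have hpre : {ω : ι → X | ∀ r < R, ω (k r) ∈ S r}
      = (fun ω r => ω (k r)) ⁻¹' (Finset.range R : Set ℕ).pi S := by
    ext; simp
  rw [hpre, ← Measure.map_apply (by fun_prop) (.pi (Finset.countable_toSet _) fun r _ => hS r),
    Measure.map_infinitePi_infinitePi_of_inj hk, Measure.infinitePi_pi _ fun r _ => hS r]
  calc ∏ r ∈ Finset.range R, ν (S r) ≤ ∏ _r ∈ Finset.range R, β :=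
        Finset.prod_le_prod' fun r _ => hβ r
    _ = β ^ R := by simp

lemma ae_infinitePi_forall {ι X : Type*} [Countable ι] [MeasurableSpace X] (ν : Measure X)
    [IsProbabilityMeasure ν] {p : X → Prop} (hp : ∀ᵐ x ∂ν, p x) :
    ∀ᵐ ω ∂Measure.infinitePi (fun _ : ι => ν), ∀ i, p (ω i) :=
  ae_all_iff.2 fun i => ae_of_ae_map (measurable_pi_apply i).aemeasurable
    (by rwa [Measure.infinitePi_map_eval])

lemma exists_notMem_of_ae_of_measure_lt_one {X : Type*} [MeasurableSpace X] {μ : Measure X}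
    [IsProbabilityMeasure μ] {s : Set X} (hs : μ s < 1) {p : X → Prop} (hp : ∀ᵐ x ∂μ, p x) :
    ∃ x, p x ∧ x ∉ s := by
  by_contra! h
  have hcover : (univ : Set X) ⊆ s ∪ {x | ¬ p x} := fun x _ =>
    (em (p x)).elim (fun hx => .inl (h x hx)) .inr
  have := (measure_mono (μ := μ) hcover).trans (measure_union_le _ _)
  rw [measure_univ, ae_iff.1 hp, add_zero] at this
  exact hs.not_ge this

lemma eventually_le_exp_mul_of_tendsto_log_div {u : ℕ → ℝ}
    (hu : Tendsto (fun n : ℕ => Real.log (u n) / n) atTop (𝓝 0)) {c : ℝ} (hc : 0 < c) :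
    ∀ᶠ n : ℕ in atTop, u n ≤ Real.exp (c * n) := by
  filter_upwards [hu.eventually_le_const hc, eventually_ge_atTop 1] with n hlog hn
  rcases le_or_gt (u n) 0 with hu0 | hu0
  · exact hu0.trans (Real.exp_pos _).le
  · rw [← Real.log_le_iff_le_exp hu0]
    rw [div_le_iff₀ (by exact_mod_cast hn)] at hlog
    linarith

lemma tendsto_one_add_sq_mul_pow_of_tendsto_log_div {u : ℕ → ℝ} (hu0 : ∀ n, 0 ≤ u n)
    (hu : Tendsto (fun n : ℕ => Real.log (u n) / n) atTop (𝓝 0)) {β : ℝ} (hβ0 : 0 ≤ β)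
    (hβ1 : β < 1) :
    Tendsto (fun n : ℕ => (1 + u n) ^ 2 * β ^ n) atTop (𝓝 0) := by
  obtain ⟨ρ, hβρ, hρ1⟩ := exists_between hβ1
  have hρ0 : 0 < ρ := hβ0.trans_lt hβρ
  have hc : 0 < -Real.log ρ / 2 := by linarith [Real.log_neg hρ0 hρ1]
  have hgeom : Tendsto (fun n : ℕ => 4 * (β / ρ) ^ n) atTop (𝓝 0) := by
    simpa using (tendsto_pow_atTop_nhds_zero_of_lt_one (div_nonneg hβ0 hρ0.le)
      ((div_lt_one hρ0).2 hβρ)).const_mul 4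
  refine squeeze_zero' (.of_forall fun n => by positivity) ?_ hgeom
  filter_upwards [eventually_le_exp_mul_of_tendsto_log_div hu hc] with n hn
  set e := Real.exp (-Real.log ρ / 2 * n)
  have he : e ^ 2 * ρ ^ n = 1 := by
    rw [sq, ← Real.exp_add, ← Real.exp_log hρ0, ← Real.exp_nat_mul, Real.exp_log hρ0,
      ← Real.exp_add]
    convert Real.exp_zero using 2
    ring
  have h1e : 1 ≤ e := Real.one_le_exp (by positivity)
  calc (1 + u n) ^ 2 * β ^ n ≤ (2 * e) ^ 2 * β ^ n := by gcongr; linarith [hu0 n]; linarith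
    _ = 4 * (e ^ 2 * ρ ^ n) * (β / ρ) ^ n := by rw [div_pow]; field_simp; ring
    _ = 4 * (β / ρ) ^ n := by rw [he, mul_one]

noncomputable def uniform02 : Measure ℝ := ProbabilityTheory.cond volume (Icc (0 : ℝ) 2)

instance : IsProbabilityMeasure uniform02 :=
  ProbabilityTheory.cond_isProbabilityMeasure_of_finite (by simp) (by simp)

local notation "ℙ" => Measure.infinitePi fun _ : ℤ => uniform02

lemma uniform02_Icc {x y : ℝ} (h : Icc x y ⊆ Icc 0 2) :
    uniform02 (Icc x y) = ENNReal.ofReal ((y - x) / 2) := by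
  rw [uniform02, ProbabilityTheory.cond_apply measurableSet_Icc, inter_eq_right.2 h,
    Real.volume_Icc, Real.volume_Icc, ENNReal.ofReal_div_of_pos two_pos, sub_zero,
    ENNReal.div_eq_inv_mul]

def holes (ε : ℝ) (ω : ℤ → ℝ) : Set ℝ := ⋃ k : ℤ, Icc (k + ω k) (k + ω k + ε)

def trap (ε y : ℝ) : Set ℝ := Icc (Int.fract y + 1 - ε / 2) (Int.fract y + 1)

lemma Icc_subset_holes_of_mem_trap {ε y : ℝ} {ω : ℤ → ℝ} (h : ω (⌊y⌋ - 1) ∈ trap ε y) :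
    Icc y (y + ε / 2) ⊆ holes ε ω := by
  intro z ⟨hz₁, hz₂⟩
  refine mem_iUnion.2 ⟨⌊y⌋ - 1, ?_⟩
  obtain ⟨h₁, h₂⟩ := h
  rw [Int.fract] at h₁ h₂
  push_cast
  constructor <;> linarith

lemma uniform02_compl_trap {ε : ℝ} (hε₀ : 0 ≤ ε) (hε₂ : ε ≤ 2) (y : ℝ) :
    uniform02 (trap ε y)ᶜ = ENNReal.ofReal (1 - ε / 4) := by
  have hsub : trap ε y ⊆ Icc 0 2 := by
    have := Int.fract_nonneg y
    have := Int.fract_lt_one y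
    exact Icc_subset_Icc (by linarith) (by linarith)
  rw [trap, prob_compl_eq_one_sub measurableSet_Icc, uniform02_Icc hsub,
    ENNReal.ofReal_sub _ (by positivity), ENNReal.ofReal_one]
  ring_nf

def missesTraps (ε : ℝ) (y : ℕ → ℝ) (R : ℕ) : Set (ℤ → ℝ) :=
  {ω | ∀ r < R, ω (⌊y r⌋ - 1) ∉ trap ε (y r)}

/-- Trial points at distance `≥ 1` use distinct coordinates `⌊y r⌋ - 1`, hence independent
ones. -/
lemma measure_missesTraps_le {ε : ℝ} (hε₀ : 0 ≤ ε) (hε₂ : ε ≤ 2) {y : ℕ → ℝ}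
    (hy : ∀ r, y r + 1 ≤ y (r + 1)) (R : ℕ) :
    ℙ (missesTraps ε y R) ≤ ENNReal.ofReal (1 - ε / 4) ^ R := by
  have hmono : StrictMono fun r => ⌊y r⌋ - 1 := strictMono_nat_of_lt_succ fun r => by
    have := Int.floor_mono (hy r)
    rw [Int.floor_add_one] at this
    omega
  exact infinitePi_setOf_forall_mem_le_pow _ hmono.injective
    (fun r => measurableSet_Icc.compl) (fun r => (uniform02_compl_trap hε₀ hε₂ (y r)).le) R

lemma volume_holes_inter_Icc_le {ε : ℝ} (hε₁ : ε < 1) {ω : ℤ → ℝ}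
    (hω : ∀ k, ω k ∈ Icc (0 : ℝ) 2) (m : ℤ) :
    volume (holes ε ω ∩ Icc (m : ℝ) (m + 1)) ≤ ENNReal.ofReal (4 * ε) := by
  have hsub : holes ε ω ∩ Icc (m : ℝ) (m + 1)
      ⊆ ⋃ k ∈ Finset.Icc (m - 2) (m + 1), Icc (k + ω k) (k + ω k + ε) := by
    rintro z ⟨hz, hzm₁, hzm₂⟩
    obtain ⟨k, hk₁, hk₂⟩ := mem_iUnion.1 hz
    have hlo : (m : ℝ) - 3 < k := by linarith [(hω k).2]
    have hhi : (k : ℝ) ≤ m + 1 := by linarith [(hω k).1]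
    refine mem_biUnion (Finset.mem_Icc.2 ⟨?_, ?_⟩) ⟨hk₁, hk₂⟩
    · have : m - 3 < k := by exact_mod_cast hlo
      omega
    · exact_mod_cast hhi
  calc volume (holes ε ω ∩ Icc (m : ℝ) (m + 1))
      ≤ ∑ k ∈ Finset.Icc (m - 2) (m + 1), volume (Icc (k + ω k) (k + ω k + ε)) :=
        (measure_mono hsub).trans (measure_biUnion_finset_le _ _)
    _ = ENNReal.ofReal (4 * ε) := by
        simp only [Real.volume_Icc, add_sub_cancel_left, Finset.sum_const, Int.card_Icc]
        rw [show m + 1 + 1 - (m - 2) = 4 by ring, nsmul_eq_mul,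
          ENNReal.ofReal_mul (by norm_num)]
        congr 1
        simp

lemma ofReal_one_sub_le_volume_compl_holes_inter_Icc {ε : ℝ} (hε₀ : 0 ≤ ε) (hε₁ : ε < 1)
    {ω : ℤ → ℝ} (hω : ∀ k, ω k ∈ Icc (0 : ℝ) 2) (m : ℤ) :
    ENNReal.ofReal (1 - 4 * ε) ≤ volume ((holes ε ω)ᶜ ∩ Icc (m : ℝ) (m + 1)) := by
  have hI : volume (Icc (m : ℝ) (m + 1)) = 1 := by simp [Real.volume_Icc]
  calc ENNReal.ofReal (1 - 4 * ε)
      = volume (Icc (m : ℝ) (m + 1)) - ENNReal.ofReal (4 * ε) := by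
        rw [hI, ENNReal.ofReal_sub _ (by positivity), ENNReal.ofReal_one]
    _ ≤ volume (Icc (m : ℝ) (m + 1)) - volume (holes ε ω ∩ Icc (m : ℝ) (m + 1)) :=
        tsub_le_tsub_left (volume_holes_inter_Icc_le hε₁ hω m) _
    _ ≤ volume (Icc (m : ℝ) (m + 1) \ (holes ε ω ∩ Icc (m : ℝ) (m + 1))) :=
        le_measure_sdiff
    _ = volume ((holes ε ω)ᶜ ∩ Icc (m : ℝ) (m + 1)) := by
        congr 1
        ext z
        simp [and_comm]

lemma sub_natFloor_div_mul_mem_Ico {z δ : ℝ} (hz : 0 ≤ z) (hδ : 0 < δ) :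
    z - ⌊z / δ⌋₊ * δ ∈ Ico 0 δ := by
  have h₁ := Nat.floor_le (div_nonneg hz hδ.le)
  have h₂ := Nat.lt_floor_add_one (z / δ)
  rw [le_div_iff₀ hδ] at h₁
  rw [div_lt_iff₀ hδ] at h₂
  constructor <;> nlinarith

lemma natCeil_inv_mul_natFloor_div_add_one_le {δ d : ℝ} (hδ₀ : 0 < δ) (hδ₁ : δ ≤ 1)
    (hd : 0 ≤ d) : (⌈δ⁻¹⌉₊ : ℝ) * (⌊d / δ⌋₊ + 1) ≤ 2 * (d + 1) / δ ^ 2 := by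
  have h₁ : (⌈δ⁻¹⌉₊ : ℝ) ≤ 2 / δ := by
    have := Nat.ceil_lt_add_one (inv_nonneg.2 hδ₀.le)
    have : 1 ≤ δ⁻¹ := one_le_inv₀ hδ₀ |>.2 hδ₁
    rw [div_eq_mul_inv]
    linarith
  have h₂ : (⌊d / δ⌋₊ : ℝ) + 1 ≤ (d + 1) / δ := by
    have := Nat.floor_le (div_nonneg hd hδ₀.le)
    rw [add_div]
    linarith [(one_le_div hδ₀).2 hδ₁]
  calc (⌈δ⁻¹⌉₊ : ℝ) * (⌊d / δ⌋₊ + 1) ≤ 2 / δ * ((d + 1) / δ) := by gcongr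
    _ = 2 * (d + 1) / δ ^ 2 := by field_simp

section Grid

variable (u : ℕ → ℝ) (a b ε : ℝ)

/-- Some grid point `(m + i δ, a + j δ)` of the cell `[m, m + 1) × [a, b]` has none of its
trial points `m + i δ + (a + j δ) u r`, `r < R`, trapped. -/
noncomputable def cellMiss (R : ℕ) (m : ℤ) : Set (ℤ → ℝ) :=
  let δ := ε / (2 * (1 + u R))
  ⋃ i ∈ Finset.range ⌈δ⁻¹⌉₊, ⋃ j ∈ Finset.range (⌊(b - a) / δ⌋₊ + 1),
    missesTraps ε (fun r => m + i * δ + (a + j * δ) * u r) R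

variable {u a b ε}

lemma measure_cellMiss_le (hu₀ : ∀ r, 0 ≤ u r) (ha : 0 < a)
    (hgap : ∀ r, 1 ≤ a * (u (r + 1) - u r)) (hab : a ≤ b) (hε₀ : 0 < ε) (hε₂ : ε ≤ 2)
    (R : ℕ) (m : ℤ) :
    ℙ (cellMiss u a b ε R m)
      ≤ ENNReal.ofReal (8 * (b - a + 1) / ε ^ 2 * ((1 + u R) ^ 2 * (1 - ε / 4) ^ R)) := by
  set δ := ε / (2 * (1 + u R)) with hδ
  have hδ₀ : 0 < δ := by have := hu₀ R; positivity
  have hδ₁ : δ ≤ 1 := by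
    rw [hδ, div_le_one (by linarith [hu₀ R])]
    linarith [hu₀ R]
  have htrial : ∀ i j : ℕ, ∀ r, (m + i * δ + (a + j * δ) * u r) + 1
      ≤ m + i * δ + (a + j * δ) * u (r + 1) := fun i j r => by
    have := hgap r
    have : 0 ≤ j * δ * (u (r + 1) - u r) := by
      have : 0 ≤ u (r + 1) - u r := by nlinarith
      positivity
    nlinarith
  calc ℙ (cellMiss u a b ε R m)
      ≤ ∑ i ∈ Finset.range ⌈δ⁻¹⌉₊, ∑ j ∈ Finset.range (⌊(b - a) / δ⌋₊ + 1),
          ENNReal.ofReal (1 - ε / 4) ^ R :=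
        (measure_biUnion_finset_le _ _).trans <| Finset.sum_le_sum fun i _ =>
          (measure_biUnion_finset_le _ _).trans <| Finset.sum_le_sum fun j _ =>
            measure_missesTraps_le hε₀.le hε₂ (htrial i j) R
    _ = ENNReal.ofReal ((⌈δ⁻¹⌉₊ : ℝ) * ((⌊(b - a) / δ⌋₊ + 1 : ℕ) : ℝ) * (1 - ε / 4) ^ R) := by
        rw [ENNReal.ofReal_mul (by positivity), ENNReal.ofReal_pow (by linarith),
          ENNReal.ofReal_mul (by positivity), ENNReal.ofReal_natCast, ENNReal.ofReal_natCast]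
        simp only [Finset.sum_const, Finset.card_range, nsmul_eq_mul, mul_assoc]
    _ ≤ ENNReal.ofReal (8 * (b - a + 1) / ε ^ 2 * ((1 + u R) ^ 2 * (1 - ε / 4) ^ R)) := by
        refine ENNReal.ofReal_le_ofReal ?_
        calc (⌈δ⁻¹⌉₊ : ℝ) * ((⌊(b - a) / δ⌋₊ + 1 : ℕ) : ℝ) * (1 - ε / 4) ^ R
            ≤ 2 * (b - a + 1) / δ ^ 2 * (1 - ε / 4) ^ R := by
              push_cast
              exact mul_le_mul_of_nonneg_right
                (natCeil_inv_mul_natFloor_div_add_one_le hδ₀ hδ₁ (by linarith))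
                (pow_nonneg (by linarith) _)
          _ = 8 * (b - a + 1) / ε ^ 2 * ((1 + u R) ^ 2 * (1 - ε / 4) ^ R) := by
              rw [hδ]
              have := hu₀ R
              field_simp
              ring

lemma tendsto_measure_cellMiss (hu₀ : ∀ r, 0 ≤ u r)
    (hgrowth : Tendsto (fun r : ℕ => Real.log (u r) / r) atTop (𝓝 0)) (ha : 0 < a)
    (hgap : ∀ r, 1 ≤ a * (u (r + 1) - u r)) (hab : a ≤ b) (hε₀ : 0 < ε) (hε₂ : ε ≤ 2) (m : ℤ) :
    Tendsto (fun R => ℙ (cellMiss u a b ε R m)) atTop (𝓝 0) := by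
  have hlim := ((tendsto_one_add_sq_mul_pow_of_tendsto_log_div hu₀ hgrowth (by linarith)
    (by linarith : 1 - ε / 4 < 1)).const_mul (8 * (b - a + 1) / ε ^ 2))
  rw [mul_zero] at hlim
  refine tendsto_of_tendsto_of_tendsto_of_le_of_le tendsto_const_nhds
    (by simpa using ENNReal.tendsto_ofReal hlim) (fun _ => zero_le)
    fun R => measure_cellMiss_le hu₀ ha hgap hab hε₀ hε₂ R m

lemma exists_mem_holes_of_forall_notMem_cellMiss (hu₀ : ∀ r, 0 ≤ u r) (hmono : Monotone u)
    (hε₀ : 0 < ε) {R : ℤ → ℕ} {ω : ℤ → ℝ} (hω : ∀ m, ω ∉ cellMiss u a b ε (R m) m) (x : ℝ)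
    {t : ℝ} (ht : t ∈ Icc a b) : ∃ r, x + t * u r ∈ holes ε ω := by
  set m := ⌊x⌋
  set δ := ε / (2 * (1 + u (R m))) with hδ
  have hδ₀ : 0 < δ := by have := hu₀ (R m); positivity
  obtain ⟨hx₀, hx₁⟩ := sub_natFloor_div_mul_mem_Ico (sub_nonneg.2 (Int.floor_le x)) hδ₀
  obtain ⟨ht₀, ht₁⟩ := sub_natFloor_div_mul_mem_Ico (sub_nonneg.2 ht.1) hδ₀
  set i := ⌊(x - m) / δ⌋₊
  set j := ⌊(t - a) / δ⌋₊
  have hi : i ∈ Finset.range ⌈δ⁻¹⌉₊ := by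
    refine Finset.mem_range.2 ((Nat.floor_lt (div_nonneg (sub_nonneg.2 (Int.floor_le x))
      hδ₀.le)).2 (lt_of_lt_of_le ?_ (Nat.le_ceil _)))
    rw [div_lt_iff₀ hδ₀, inv_mul_cancel₀ hδ₀.ne']
    linarith [Int.lt_floor_add_one x]
  have hj : j ∈ Finset.range (⌊(b - a) / δ⌋₊ + 1) :=
    Finset.mem_range.2 (Nat.lt_succ_of_le (Nat.floor_le_floor (by gcongr; exact ht.2)))
  obtain ⟨r, hr, htrap⟩ : ∃ r < R m, ω (⌊m + i * δ + (a + j * δ) * u r⌋ - 1)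
      ∈ trap ε (m + i * δ + (a + j * δ) * u r) := by
    by_contra! h
    exact hω m (mem_biUnion hi (mem_biUnion hj h))
  have hur : u r ≤ u (R m) := hmono hr.le
  have hδu : δ * (1 + u (R m)) = ε / 2 := by
    rw [hδ]
    have := hu₀ (R m)
    field_simp
  refine ⟨r, Icc_subset_holes_of_mem_trap htrap ⟨?_, ?_⟩⟩
  · nlinarith [hu₀ r]
  · nlinarith [hu₀ r]

end Grid

theorem exists_large_set_forall_exists_notMem {u : ℕ → ℝ} {a b ε : ℝ} (hu₀ : 0 ≤ u 0)
    (ha : 0 < a) (hgap : ∀ r, 1 ≤ a * (u (r + 1) - u r))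
    (hgrowth : Tendsto (fun r : ℕ => Real.log (u r) / r) atTop (𝓝 0)) (hab : a ≤ b)
    (hε₀ : 0 < ε) (hε₁ : ε < 1) :
    ∃ E : Set ℝ, MeasurableSet E ∧
      (∀ m : ℤ, ENNReal.ofReal (1 - 4 * ε) ≤ volume (E ∩ Icc (m : ℝ) (m + 1))) ∧
      ∀ x, ∀ t ∈ Icc a b, ∃ r, x + t * u r ∉ E := by
  have hmono : Monotone u := monotone_nat_of_le_succ fun r => by nlinarith [hgap r]
  have hu : ∀ r, 0 ≤ u r := fun r => hu₀.trans (hmono r.zero_le)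
  obtain ⟨c, hc₀, hc⟩ := ENNReal.exists_pos_sum_of_countable one_ne_zero ℤ
  have hR : ∀ m, ∃ R, ℙ (cellMiss u a b ε R m) < c m :=
    fun m => ((tendsto_order.1 (tendsto_measure_cellMiss hu hgrowth ha hgap hab hε₀
      (by linarith) m)).2 _ (ENNReal.coe_pos.2 (hc₀ m))).exists
  choose R hR using hR
  have hbad : ℙ (⋃ m, cellMiss u a b ε (R m) m) < 1 :=
    calc _ ≤ ∑' m, ℙ (cellMiss u a b ε (R m) m) := measure_iUnion_le _
      _ ≤ ∑' m, (c m : ℝ≥0∞) := ENNReal.tsum_le_tsum fun m => (hR m).le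
      _ < 1 := hc
  obtain ⟨ω, hω, hmiss⟩ := exists_notMem_of_ae_of_measure_lt_one hbad
    (ae_infinitePi_forall uniform02 (ProbabilityTheory.ae_cond_mem measurableSet_Icc))
  refine ⟨(holes ε ω)ᶜ, (MeasurableSet.iUnion fun k => measurableSet_Icc).compl,
    ofReal_one_sub_le_volume_compl_holes_inter_Icc hε₀.le hε₁ hω, fun x t ht => ?_⟩
  obtain ⟨r, hr⟩ := exists_mem_holes_of_forall_notMem_cellMiss hu hmono hε₀
    (fun m h => hmiss (mem_iUnion.2 ⟨m, h⟩)) x ht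
  exact ⟨r, not_not.2 hr⟩

lemma natCast_le_sub_of_one_le_sub_succ {f : ℕ → ℝ} (hf : ∀ n, 1 ≤ f (n + 1) - f n)
    (n k : ℕ) : (k : ℝ) ≤ f (n + k) - f n := by
  induction k with
  | zero => simp
  | succ k ih =>
    have := hf (n + k)
    push_cast
    rw [← add_assoc]
    linarith

lemma tendsto_log_comp_mul_div {f : ℕ → ℝ}
    (hf : Tendsto (fun n : ℕ => Real.log (f n) / n) atTop (𝓝 0)) {s : ℕ} (hs : 0 < s) :
    Tendsto (fun r : ℕ => Real.log (f (r * s)) / r) atTop (𝓝 0) := by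
  have hmul : Tendsto (fun r : ℕ => r * s) atTop atTop :=
    tendsto_atTop_mono (fun r => Nat.le_mul_of_pos_right r hs) tendsto_id
  have := (hf.comp hmul).const_mul (s : ℝ)
  rw [mul_zero] at this
  refine this.congr fun r => ?_
  have : (s : ℝ) ≠ 0 := by positivity
  simp only [Function.comp_apply, Nat.cast_mul]
  rcases eq_or_ne r 0 with rfl | hr
  · simp
  · field_simp

/-- **Large sets with no affine copy of a class-(A) sequence at scales in `[a, b]`.**
If `aseq` is of class (A) then for all `0 < a < b` and `0 ≤ p < 1` there is a measurable
`E ⊆ ℝ` with `|E ∩ [m, m+1]| ≥ p` for all `m ∈ ℤ`, such that for all `x ∈ ℝ` and all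
`t ∈ [a, b]` the set `{x + t * aseq n : n ∈ ℕ}` is not contained in `E`. -/
theorem large_set_no_affine_copy_bounded_scale
    (aseq : ℕ → ℝ) (h0 : aseq 0 = 0) (hgap : ∀ n : ℕ, 1 ≤ aseq (n + 1) - aseq n)
    (hgrowth : Tendsto (fun n : ℕ => Real.log (aseq n) / (n : ℝ)) atTop (nhds 0))
    (a b : ℝ) (ha : 0 < a) (hab : a < b)
    (p : ℝ) (hp0 : 0 ≤ p) (hp1 : p < 1) :
    ∃ E : Set ℝ, MeasurableSet E ∧
      (∀ m : ℤ, ENNReal.ofReal p ≤ volume (E ∩ Set.Icc (m : ℝ) ((m : ℝ) + 1))) ∧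
      (∀ x : ℝ, ∀ t ∈ Set.Icc a b,
        ¬ (Set.range (fun n : ℕ => x + t * aseq n) ⊆ E)) := by
  set s := ⌈a⁻¹⌉₊
  have hs : 1 ≤ a * s := by
    rw [← mul_inv_cancel₀ ha.ne']
    exact mul_le_mul_of_nonneg_left (Nat.le_ceil _) ha.le
  have hsgap : ∀ r, 1 ≤ a * (aseq ((r + 1) * s) - aseq (r * s)) := fun r => by
    rw [add_one_mul]
    nlinarith [natCast_le_sub_of_one_le_sub_succ hgap (r * s) s]
  obtain ⟨E, hE, hdense, hmiss⟩ :=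
    exists_large_set_forall_exists_notMem (u := fun r => aseq (r * s)) (ε := (1 - p) / 4)
      (by simp [h0]) ha hsgap (tendsto_log_comp_mul_div hgrowth (Nat.ceil_pos.2 (inv_pos.2 ha)))
      hab.le (by linarith) (by linarith)
  refine ⟨E, hE, fun m => by convert hdense m using 2; ring, fun x t ht hsub => ?_⟩
  obtain ⟨r, hr⟩ := hmiss x t ht
  exact hr (hsub ⟨r * s, rfl⟩)
end
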